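/- arXiv:1809.09160 — 2 statements merged into one kernel-verified Lean document; each statement's English description precedes it below -/
import Mathlib

section
/- Let D be an integral domain with quotient field K, A a finitely generated torsion-free D-algebra, B = A ⊗_D K, with A ∩ K = D under the canonical embeddings into B, and let S ⊆ A. Then S is a right ringset if and only if, for every nonzero d ∈ D, the image S + dA = {s + dA : s ∈ S}, as a subset of the quotient ring A/dA, is a right null-ideal set, i.e., N^r_{A/dA}(S + dA) = {g ∈ (A/dA)[x] : g_r(σ) = 0 for all σ ∈ S + dA} is a right ideal of (A/dA)[x]. -/
/-!
Clearing denominators reduces integer-valuedness to congruences: if `d • F = f` with `f ∈ A[X]`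
and `d ≠ 0`, then `F` is integer-valued on `S` exactly when `f(s) ∈ dA` for all `s ∈ S`, i.e. when
the reduction of `f` lies in `N^r_{A/dA}(S + dA)`. Right evaluation is not multiplicative, but
`(f * g)(s) = (f * C (g s))(s)`. If `S` is a right ringset and `f` vanishes mod `d` on `S`, then
`(f / d) * g` is integer-valued, so `f * g` vanishes mod `d` on `S` as well. Conversely, write
`d • F = f` and `d • G = g` with a common `d`. Then `g(s) = d c` and `f * C c` vanishes mod `d`
on `S`, so `(f * g)(s) = d • (f * C c)(s) ∈ d²A`. Hence `F * G` is integer-valued.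
-/

open Polynomial TensorProduct

/-- The set `Int^r_B(S,A)` of right integer-valued polynomials on `S ⊆ A`, where
`B = A ⊗_D K` and `A` is embedded in `B` via `a ↦ a ⊗ 1`.  Right evaluation is
Mathlib's `Polynomial.eval`. -/
def IntRight (D K A : Type*) [CommRing D] [Field K] [Algebra D K]
    [Ring A] [Algebra D A] (S : Set A) : Set (A ⊗[D] K)[X] :=
  {F : (A ⊗[D] K)[X] | ∀ s ∈ S,
    F.eval (Algebra.TensorProduct.includeLeftRingHom (R := D) (B := K) s) ∈
      Set.range (Algebra.TensorProduct.includeLeftRingHom (R := D) (A := A) (B := K))}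

/-- A subset `N` of a (possibly noncommutative) ring is a right ideal:
an additive subgroup closed under multiplication from the right. -/
def IsRightIdealSet {R : Type*} [Ring R] (N : Set R) : Prop :=
  0 ∈ N ∧ (∀ a ∈ N, ∀ b ∈ N, a + b ∈ N) ∧ (∀ a ∈ N, -a ∈ N) ∧
    ∀ g : R, ∀ a ∈ N, a * g ∈ N

/-- The two-sided ideal `dA` of `A`. -/
def dIdeal (D A : Type*) [CommRing D] [Ring A] [Algebra D A] (d : D) : TwoSidedIdeal A :=
  TwoSidedIdeal.span (Set.range fun a : A => d • a)

namespace Polynomial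

variable {R : Type*}

theorem eval_mul_eq_eval_mul_C [Semiring R] (p q : R[X]) (s : R) :
    (p * q).eval s = (p * C (q.eval s)).eval s := by
  induction p using Polynomial.induction_on' with
  | add p₁ p₂ h₁ h₂ => simp only [add_mul, eval_add, h₁, h₂]
  | monomial n b =>
    rw [← C_mul_X_pow_eq_monomial, mul_assoc, X_pow_mul, mul_assoc, X_pow_mul,
      eval_C_mul, eval_C_mul, eval_mul_X_pow, eval_mul_X_pow, eval_C]

def rightNullSet [Ring R] (T : Set R) : Set R[X] :=
  {g | ∀ σ ∈ T, g.eval σ = 0}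

theorem isRightIdealSet_rightNullSet_iff [Ring R] {T : Set R} :
    IsRightIdealSet (rightNullSet T) ↔ ∀ f ∈ rightNullSet T, ∀ g, f * g ∈ rightNullSet T := by
  refine ⟨fun h f hf g => h.2.2.2 g f hf, fun h => ⟨?_, ?_, ?_, fun g f hf => h f hf g⟩⟩
  · exact fun σ _ => eval_zero
  · exact fun f hf g hg σ hσ => by rw [eval_add, hf σ hσ, hg σ hσ, add_zero]
  · exact fun f hf σ hσ => by rw [eval_neg, hf σ hσ, neg_zero]

end Polynomial

section Quotient

variable {D A : Type*} [CommRing D] [Ring A] [Algebra D A] {d : D}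

theorem mem_dIdeal_iff {x : A} : x ∈ dIdeal D A d ↔ ∃ b, d • b = x := by
  let I : TwoSidedIdeal A := .mk' (Set.range (d • ·)) ⟨0, smul_zero d⟩
    (by rintro _ _ ⟨a, rfl⟩ ⟨b, rfl⟩; exact ⟨a + b, smul_add d a b⟩)
    (by rintro _ ⟨a, rfl⟩; exact ⟨-a, smul_neg d a⟩)
    (by rintro x _ ⟨a, rfl⟩; exact ⟨x * a, (mul_smul_comm d x a).symm⟩)
    (by rintro _ y ⟨a, rfl⟩; exact ⟨a * y, (smul_mul_assoc d a y).symm⟩)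
  have hle : dIdeal D A d ≤ I :=
    TwoSidedIdeal.span_le.mpr fun y hy => (TwoSidedIdeal.mem_mk' ..).mpr hy
  refine ⟨fun hx => (TwoSidedIdeal.mem_mk' (Set.range (d • ·)) _ _ _ _ _ x).mp (hle hx), ?_⟩
  rintro ⟨b, rfl⟩
  exact TwoSidedIdeal.subset_span ⟨b, rfl⟩

theorem mk'_dIdeal_eq_zero_iff {x : A} :
    RingCon.mk' (dIdeal D A d).ringCon x = 0 ↔ ∃ b, d • b = x := by
  rw [← TwoSidedIdeal.mem_ker, TwoSidedIdeal.ker_ringCon_mk', mem_dIdeal_iff]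

theorem map_mk'_mem_rightNullSet_iff {S : Set A} {f : A[X]} :
    f.map (RingCon.mk' (dIdeal D A d).ringCon) ∈ rightNullSet (RingCon.mk' _ '' S) ↔
      ∀ s ∈ S, ∃ b, d • b = f.eval s := by
  simp only [rightNullSet, Set.forall_mem_image, Set.mem_ofPred_eq, eval_map_apply,
    mk'_dIdeal_eq_zero_iff]

theorem isRightIdealSet_rightNullSet_image_mk'_iff {S : Set A} :
    IsRightIdealSet (rightNullSet (RingCon.mk' (dIdeal D A d).ringCon '' S)) ↔
      ∀ f : A[X], (∀ s ∈ S, ∃ b, d • b = f.eval s) →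
        ∀ g : A[X], ∀ s ∈ S, ∃ b, d • b = (f * g).eval s := by
  have hπ := map_surjective _ (RingCon.mk'_surjective (dIdeal D A d).ringCon)
  simp only [isRightIdealSet_rightNullSet_iff, hπ.forall, ← Polynomial.map_mul,
    map_mk'_mem_rightNullSet_iff]

end Quotient

def IsRightRingset (D K A : Type*) [CommRing D] [Field K] [Algebra D K] [Ring A] [Algebra D A]
    (S : Set A) : Prop :=
  ∀ F ∈ IntRight D K A S, ∀ G ∈ IntRight D K A S, F * G ∈ IntRight D K A S

section BaseChange

variable {D : Type*} [CommRing D] {K : Type*} [Field K] [Algebra D K]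
  {A : Type*} [Ring A] [Algebra D A]

local notation "ι" => Algebra.TensorProduct.includeLeftRingHom (R := D) (A := A) (B := K)
local notation "ιₗ" =>
  AlgHom.toLinearMap (Algebra.TensorProduct.includeLeft (R := D) (S := D) (A := A) (B := K))

instance isLocalizedModule_includeLeft [IsFractionRing D K] :
    IsLocalizedModule (nonZeroDivisors D) ιₗ := by
  have : ιₗ = (TensorProduct.comm D K A).toLinearMap ∘ₗ TensorProduct.mk D K A 1 := by
    ext; rfl
  rw [this]
  infer_instance

theorem includeLeftRingHom_smul (d : D) (a : A) : ι (d • a) = d • ι a :=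
  map_smul ιₗ d a

theorem includeLeftRingHom_injective [IsDomain D] [IsFractionRing D K] [NoZeroSMulDivisors D A] :
    Function.Injective ι :=
  (IsLocalizedModule.injective_iff_isRegular (nonZeroDivisors D) ιₗ).mpr fun c =>
    smul_right_injective A (nonZeroDivisors.coe_ne_zero c)

theorem smul_bijective_of_ne_zero [IsDomain D] [IsFractionRing D K] {d : D} (hd : d ≠ 0) :
    Function.Bijective (d • · : A ⊗[D] K → A ⊗[D] K) :=
  (Module.End.isUnit_iff _).mp <| IsLocalizedModule.map_units ιₗ
    ⟨d, mem_nonZeroDivisors_of_ne_zero hd⟩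

theorem exists_smul_eq [IsDomain D] [IsFractionRing D K] {d : D} (hd : d ≠ 0)
    (P : (A ⊗[D] K)[X]) : ∃ F, d • F = P := by
  obtain ⟨u, hu : d • u = 1⟩ := (smul_bijective_of_ne_zero hd).surjective (1 : A ⊗[D] K)
  exact ⟨C u * P, by rw [← smul_mul_assoc, smul_C, hu, C_1, one_mul]⟩

theorem map_includeLeftRingHom_smul (d : D) (f : A[X]) : (d • f).map ι = d • f.map ι := by
  ext n
  simp only [coeff_map, coeff_smul, includeLeftRingHom_smul]

theorem exists_smul_eq_map [IsDomain D] [IsFractionRing D K] (F : (A ⊗[D] K)[X]) :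
    ∃ d : D, d ≠ 0 ∧ ∃ f : A[X], d • F = f.map ι := by
  obtain ⟨c, hc⟩ :=
    IsLocalizedModule.exist_integer_multiples (nonZeroDivisors D) ιₗ F.support F.coeff
  have hlifts : c.val • F ∈ lifts ι := by
    refine (lifts_iff_coeff_lifts _).mpr fun n => ?_
    rw [coeff_smul]
    by_cases hn : n ∈ F.support
    · exact hc n hn
    · exact ⟨0, by rw [notMem_support_iff.mp hn, smul_zero, map_zero]⟩
  obtain ⟨f, hf⟩ := (mem_lifts _).mp hlifts
  exact ⟨c, nonZeroDivisors.coe_ne_zero c, f, hf.symm⟩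

theorem exists_smul_eq_map_of_pair [IsDomain D] [IsFractionRing D K] (F G : (A ⊗[D] K)[X]) :
    ∃ d : D, d ≠ 0 ∧ ∃ f g : A[X], d • F = f.map ι ∧ d • G = g.map ι := by
  obtain ⟨d₁, hd₁, f, hf⟩ := exists_smul_eq_map F
  obtain ⟨d₂, hd₂, g, hg⟩ := exists_smul_eq_map G
  refine ⟨d₁ * d₂, mul_ne_zero hd₁ hd₂, d₂ • f, d₁ • g, ?_, ?_⟩
  · rw [map_includeLeftRingHom_smul, ← hf, smul_smul, mul_comm]
  · rw [map_includeLeftRingHom_smul, ← hg, smul_smul]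

theorem map_mem_intRight (S : Set A) (g : A[X]) : g.map ι ∈ IntRight D K A S :=
  fun s _ => ⟨g.eval s, (eval_map_apply ..).symm⟩

theorem mem_intRight_iff_of_smul_eq_map [IsDomain D] [IsFractionRing D K]
    [NoZeroSMulDivisors D A] {S : Set A} {d : D} (hd : d ≠ 0) {F : (A ⊗[D] K)[X]} {f : A[X]}
    (hF : d • F = f.map ι) :
    F ∈ IntRight D K A S ↔ ∀ s ∈ S, ∃ b, d • b = f.eval s := by
  have heval : ∀ s, ι (f.eval s) = d • F.eval (ι s) := fun s => by
    rw [← eval_map_apply, ← hF, eval_smul]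
  refine forall₂_congr fun s _ => ⟨?_, ?_⟩
  · rintro ⟨b, hb⟩
    exact ⟨b, includeLeftRingHom_injective (K := K) (by rw [includeLeftRingHom_smul, hb, heval])⟩
  · rintro ⟨b, hb⟩
    exact ⟨b, (smul_bijective_of_ne_zero hd).injective (by
      simp only [← includeLeftRingHom_smul, hb, heval])⟩

theorem IsRightRingset.exists_smul_eq_eval_mul [IsDomain D] [IsFractionRing D K]
    [NoZeroSMulDivisors D A] {S : Set A} (hS : IsRightRingset D K A S) {d : D} (hd : d ≠ 0)
    {f : A[X]} (hf : ∀ s ∈ S, ∃ b, d • b = f.eval s) (g : A[X]) :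
    ∀ s ∈ S, ∃ b, d • b = (f * g).eval s := by
  obtain ⟨F, hF⟩ := exists_smul_eq hd (f.map ι)
  have hFG : d • (F * g.map ι) = (f * g).map ι := by
    rw [← smul_mul_assoc, hF, Polynomial.map_mul]
  exact (mem_intRight_iff_of_smul_eq_map hd hFG).mp
    (hS F ((mem_intRight_iff_of_smul_eq_map hd hF).mpr hf) _ (map_mem_intRight S g))

theorem isRightRingset_of_forall_exists_smul_eq_eval_mul [IsDomain D] [IsFractionRing D K]
    [NoZeroSMulDivisors D A] {S : Set A}
    (h : ∀ d : D, d ≠ 0 → ∀ f : A[X], (∀ s ∈ S, ∃ b, d • b = f.eval s) →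
      ∀ g : A[X], ∀ s ∈ S, ∃ b, d • b = (f * g).eval s) :
    IsRightRingset D K A S := by
  intro F hF G hG
  obtain ⟨d, hd, f, g, hf, hg⟩ := exists_smul_eq_map_of_pair F G
  rw [mem_intRight_iff_of_smul_eq_map hd hf] at hF
  rw [mem_intRight_iff_of_smul_eq_map hd hg] at hG
  have hFG : (d * d) • (F * G) = (f * g).map ι := by
    rw [← smul_mul_smul_comm, hf, hg, Polynomial.map_mul]
  refine (mem_intRight_iff_of_smul_eq_map (mul_ne_zero hd hd) hFG).mpr fun s hs => ?_
  obtain ⟨c, hc⟩ := hG s hs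
  obtain ⟨e, he⟩ := h d hd f hF (C c) s hs
  exact ⟨e, by rw [eval_mul_eq_eval_mul_C, ← hc, ← smul_C, mul_smul_comm, eval_smul, ← he,
    smul_smul]⟩

end BaseChange

theorem rightRingset_iff_image_rightNullIdealSet_general
    (D : Type*) [CommRing D] [IsDomain D]
    (K : Type*) [Field K] [Algebra D K] [IsFractionRing D K]
    (A : Type*) [Ring A] [Algebra D A] [NoZeroSMulDivisors D A]
    (S : Set A) :
    (∀ F ∈ IntRight D K A S, ∀ G ∈ IntRight D K A S, F * G ∈ IntRight D K A S) ↔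
    (∀ d : D, d ≠ 0 →
      IsRightIdealSet
        {g : ((dIdeal D A d).ringCon.Quotient)[X] |
          ∀ σ ∈ (RingCon.mk' (dIdeal D A d).ringCon) '' S, g.eval σ = 0}) := by
  change IsRightRingset D K A S ↔
    ∀ d : D, d ≠ 0 → IsRightIdealSet (rightNullSet (RingCon.mk' (dIdeal D A d).ringCon '' S))
  simp only [isRightIdealSet_rightNullSet_image_mk'_iff]
  exact ⟨fun hS d hd f hf g => hS.exists_smul_eq_eval_mul hd hf g,
    isRightRingset_of_forall_exists_smul_eq_eval_mul⟩

/-- Theorem (version of the link theorem): `S ⊆ A` is a right ringset iff, for every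
nonzero `d ∈ D`, the image `S + dA` of `S` in the quotient ring `A/dA` is a right
null-ideal set, i.e. `N^r_{A/dA}(S + dA)` is a right ideal of `(A/dA)[x]`. -/
theorem rightRingset_iff_image_rightNullIdealSet
    (D : Type*) [CommRing D] [IsDomain D]
    (K : Type*) [Field K] [Algebra D K] [IsFractionRing D K]
    (A : Type*) [Ring A] [Algebra D A] [Module.Finite D A] [NoZeroSMulDivisors D A]
    (hAK : ∀ b : A ⊗[D] K,
      b ∈ Set.range (Algebra.TensorProduct.includeLeftRingHom (R := D) (A := A) (B := K)) →
      b ∈ Set.range (Algebra.TensorProduct.includeRight (R := D) (A := A) (B := K)) →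
      b ∈ Set.range (algebraMap D (A ⊗[D] K)))
    (S : Set A) :
    (∀ F ∈ IntRight D K A S, ∀ G ∈ IntRight D K A S, F * G ∈ IntRight D K A S) ↔
    (∀ d : D, d ≠ 0 →
      IsRightIdealSet
        {g : ((dIdeal D A d).ringCon.Quotient)[X] |
          ∀ σ ∈ (RingCon.mk' (dIdeal D A d).ringCon) '' S, g.eval σ = 0}) :=
  rightRingset_iff_image_rightNullIdealSet_general D K A S
end

section
/- Let R be a (possibly noncommutative) ring, T a subring of R, I a two-sided ideal of T, S ⊆ T, and C ⊆ R[x]. If Pol^r(R,S,I) is closed under right multiplication by the constant polynomials c_r(s) for all c ∈ C and s ∈ S (i.e., f ∈ Pol^r(R,S,I) and c ∈ C, s ∈ S imply f·c_r(s) ∈ Pol^r(R,S,I)), then Pol^r(R,S,I) is closed under right multiplication by elements of C (i.e., f ∈ Pol^r(R,S,I) and c ∈ C imply f·c ∈ Pol^r(R,S,I)). -/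
open Polynomial

/-- `Pol^r(R,S,I)`: the polynomials in `R[x]` mapping every element of `S ⊆ T` into
the two-sided ideal `I` of the subring `T`, under right substitution (Mathlib's
`Polynomial.eval s f = ∑ k, f.coeff k * s ^ k` is exactly right evaluation). -/
def PolRight {R : Type*} [Ring R] (T : Subring R) (I : TwoSidedIdeal T) (S : Set T) :
    Set R[X] :=
  {f : R[X] | ∀ s ∈ S, f.eval (s : R) ∈ (fun t : T => (t : R)) '' (I : Set T)}

section NoncommEval

variable {R : Type*} [Ring R]

/-- Since `X` is central in `R[X]`, `f * g = ∑ₙ C fₙ * g * Xⁿ`, so in a noncommutative ring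
the right factor enters only through its value `g(s)`. -/
theorem eval_mul_eq_sum (f g : R[X]) (s : R) :
    (f * g).eval s = f.sum fun n a => a * g.eval s * s ^ n := by
  conv_lhs => rw [← f.sum_C_mul_X_pow_eq]
  rw [Polynomial.sum, Finset.sum_mul, eval_finsetSum]
  refine Finset.sum_congr rfl fun n _ => ?_
  rw [mul_assoc, X_pow_mul, ← mul_assoc, eval_mul_X_pow, eval_C_mul]

theorem eval_mul_eq_eval_mul_C_eval (f g : R[X]) (s : R) :
    (f * g).eval s = (f * C (g.eval s)).eval s := by
  rw [eval_mul_eq_sum, eval_mul_eq_sum, eval_C]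

end NoncommEval

/-- If `Pol^r(R,S,I)` is closed under right multiplication by the constants `c_r(s)`
(`c ∈ C`, `s ∈ S`), then it is closed under right multiplication by the elements of
`C ⊆ R[x]`. -/
theorem polRight_closed_under_rightMul
    {R : Type*} [Ring R] (T : Subring R) (I : TwoSidedIdeal T) (S : Set T)
    (C : Set R[X])
    (h : ∀ f ∈ PolRight T I S, ∀ c ∈ C, ∀ s ∈ S,
      f * Polynomial.C (c.eval (s : R)) ∈ PolRight T I S) :
    ∀ f ∈ PolRight T I S, ∀ c ∈ C, f * c ∈ PolRight T I S := by
  intro f hf c hc s hs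
  rw [eval_mul_eq_eval_mul_C_eval]
  exact h f hf c hc s hs s hs
end
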